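/- arXiv:2509.03493 — 6 statements merged into one kernel-verified Lean document; each statement's English description precedes it below -/
import Mathlib

section
/- In the one-step softmax bandit setting with rewards r : A → [0,1], if for every b ∈ A we have |π_θ(b)(r(b) - V(θ))| ≤ ε, then for any optimal action a* (i.e., r(a*) = max_a r(a)), the suboptimality satisfies max_a r(a) - V(θ) ≤ ε / π_θ(a*). -/
open Real Finset

noncomputable def softmax {A : Type*} [Fintype A] (θ : A → ℝ) (a : A) : ℝ :=
  Real.exp (θ a) / ∑ a', Real.exp (θ a')

noncomputable def V {A : Type*} [Fintype A] (r : A → ℝ) (θ : A → ℝ) : ℝ :=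
  ∑ a, softmax θ a * r a

theorem softmax_bandit_suboptimality {A : Type*} [Fintype A] [Nonempty A]
    (θ : A → ℝ) (r : A → ℝ) (hr : ∀ a, r a ∈ Set.Icc (0 : ℝ) 1)
    (ε : ℝ) (hgrad : ∀ b, |softmax θ b * (r b - V r θ)| ≤ ε)
    (astar : A) (hopt : ∀ a, r a ≤ r astar) :
    r astar - V r θ ≤ ε / softmax θ astar := by
  have hsumpos : 0 < ∑ a' : A, Real.exp (θ a') :=
    Finset.sum_pos (fun a _ => Real.exp_pos _) Finset.univ_nonempty
  have hpos : ∀ a, 0 < softmax θ a := fun a =>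
    div_pos (Real.exp_pos _) hsumpos
  have hsum1 : ∑ a, softmax θ a = 1 := by
    simp [softmax, ← Finset.sum_div, div_self hsumpos.ne']
  have hV : V r θ ≤ r astar := by
    calc V r θ ≤ ∑ a, softmax θ a * r astar := by
          apply Finset.sum_le_sum
          intro a _
          exact mul_le_mul_of_nonneg_left (hopt a) (hpos a).le
      _ = r astar := by rw [← Finset.sum_mul, hsum1, one_mul]
  have h := hgrad astar
  rw [abs_of_nonneg (mul_nonneg (hpos astar).le (by linarith))] at h
  rw [le_div_iff₀ (hpos astar)]
  linarith [h, mul_comm (softmax θ astar) (r astar - V r θ)]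
end

section
/- In the one-step softmax bandit setting with rewards in [0,1], if the Euclidean norm of the policy gradient ‖∇V(θ)‖ ≤ ε, then max_a r(a) - V(θ) ≤ ε / C where C = max over optimal actions a* of π_θ(a*). -/
open Real Finset Classical

theorem softmax_bandit_suboptimality_euclidean {A : Type*} [Fintype A] [Nonempty A]
    (θ : A → ℝ) (r : A → ℝ) (hr : ∀ a, r a ∈ Set.Icc (0 : ℝ) 1)
    (ε : ℝ)
    (hgrad : Real.sqrt (∑ b, (softmax θ b * (r b - V r θ)) ^ 2) ≤ ε)
    (hne : (Finset.univ.filter (fun a : A => ∀ a', r a' ≤ r a)).Nonempty) :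
    (Finset.univ.sup' Finset.univ_nonempty r) - V r θ ≤
      ε / ((Finset.univ.filter (fun a : A => ∀ a', r a' ≤ r a)).sup' hne (softmax θ)) := by
  have hsum : (0:ℝ) < ∑ a' : A, Real.exp (θ a') :=
    Finset.sum_pos (fun a _ => Real.exp_pos _) univ_nonempty
  have hpos : ∀ a, 0 < softmax θ a := fun a =>
    div_pos (Real.exp_pos _) hsum
  have hsum1 : ∑ a, softmax θ a = 1 := by
    simp [softmax, ← Finset.sum_div, div_self hsum.ne']
  obtain ⟨astar, hastarmem, hastar⟩ := Finset.exists_mem_eq_sup'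
    hne (softmax θ)
  rw [Finset.mem_filter] at hastarmem
  have hopt : ∀ a', r a' ≤ r astar := hastarmem.2
  have hC : 0 < (Finset.univ.filter (fun a : A => ∀ a', r a' ≤ r a)).sup' hne (softmax θ) := by
    rw [hastar]; exact hpos _
  have hmax : (Finset.univ.sup' Finset.univ_nonempty r) = r astar :=
    le_antisymm (Finset.sup'_le _ _ fun b _ => hopt b)
      (Finset.le_sup' _ (Finset.mem_univ astar))
  have hV : V r θ ≤ r astar := by
    have : V r θ ≤ ∑ a, softmax θ a * r astar :=
      Finset.sum_le_sum fun b _ =>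
        mul_le_mul_of_nonneg_left (hopt b) (hpos b).le
    rwa [← Finset.sum_mul, hsum1, one_mul] at this
  have hcoord : softmax θ astar * (r astar - V r θ) ≤ ε := by
    have h1 : (softmax θ astar * (r astar - V r θ)) ^ 2 ≤
        ∑ b, (softmax θ b * (r b - V r θ)) ^ 2 :=
      Finset.single_le_sum (f := fun b => (softmax θ b * (r b - V r θ)) ^ 2) (fun b _ => sq_nonneg _) (Finset.mem_univ astar)
    have h2 := Real.sqrt_le_sqrt h1
    rw [Real.sqrt_sq (mul_nonneg (hpos astar).le (by linarith [hV]))] at h2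
    exact h2.trans hgrad
  rw [hmax, hastar, le_div_iff₀ (by rw [hastar] at hC; exact hC)]
  linarith [hcoord]
end

section
/- In the one-step softmax bandit setting, the Euclidean norm of the policy gradient is bounded by twice the entropy: ‖∇V(θ)‖ ≤ 2·H(π_θ), where ∇V(θ) has coordinates π_θ(b)(r(b) - V(θ)) and rewards take values in [0,1]. -/
/-!
Since the weights `π` sum to one, `r b - V = ∑_{a ≠ b} π a (r b - r a)`, and rewards in `[0, 1]`
give `|r b - V| ≤ 1 - π b`. Hence `‖∇V‖₂ ≤ ‖∇V‖₁ ≤ ∑_b π b (1 - π b) ≤ H(π)` by `1 - x ≤ -log x`,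
and `H(π) ≤ 2 H(π)` because the entropy is nonnegative.
-/

open Real Finset

lemma Real.sqrt_sum_sq_le_sum_abs {ι : Type*} (s : Finset ι) (f : ι → ℝ) :
    √(∑ i ∈ s, f i ^ 2) ≤ ∑ i ∈ s, |f i| := by
  rw [Real.sqrt_le_left (sum_nonneg fun i _ => abs_nonneg (f i))]
  calc ∑ i ∈ s, f i ^ 2 = ∑ i ∈ s, |f i| ^ 2 := by simp only [sq_abs]
    _ ≤ (∑ i ∈ s, |f i|) ^ 2 := sum_sq_le_sq_sum_of_nonneg fun i _ => abs_nonneg (f i)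

lemma Real.mul_one_sub_le_negMulLog {x : ℝ} (hx : 0 ≤ x) : x * (1 - x) ≤ negMulLog x := by
  rcases hx.eq_or_lt with rfl | hx
  · simp
  rw [negMulLog, neg_mul, ← mul_neg]
  exact mul_le_mul_of_nonneg_left (by linarith [log_le_sub_one_of_pos hx]) hx.le

lemma abs_sub_sum_mul_le_one_sub {ι : Type*} [Fintype ι] {p r : ι → ℝ} (hp : ∀ a, 0 ≤ p a)
    (hp_sum : ∑ a, p a = 1) (hr : ∀ a, r a ∈ Set.Icc (0 : ℝ) 1) (b : ι) :
    |r b - ∑ a, p a * r a| ≤ 1 - p b := by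
  classical
  have hdev : r b - ∑ a, p a * r a = ∑ a ∈ univ.erase b, p a * (r b - r a) := by
    rw [sum_erase _ (by simp)]
    simp only [mul_sub, sum_sub_distrib, ← sum_mul, hp_sum, one_mul]
  calc |r b - ∑ a, p a * r a| ≤ ∑ a ∈ univ.erase b, |p a * (r b - r a)| :=
        hdev ▸ abs_sum_le_sum_abs _ _
    _ ≤ ∑ a ∈ univ.erase b, p a := sum_le_sum fun a _ => by
        rw [abs_mul, abs_of_nonneg (hp a)]
        exact mul_le_of_le_one_right (hp a)
          (abs_sub_le_of_nonneg_of_le (hr b).1 (hr b).2 (hr a).1 (hr a).2)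
    _ = 1 - p b := by rw [sum_erase_eq_sub (mem_univ b), hp_sum]

lemma softmax_nonneg {A : Type*} [Fintype A] (θ : A → ℝ) (a : A) : 0 ≤ softmax θ a :=
  div_nonneg (exp_pos _).le (sum_nonneg fun _ _ => (exp_pos _).le)

lemma sum_softmax {A : Type*} [Fintype A] [Nonempty A] (θ : A → ℝ) : ∑ a, softmax θ a = 1 := by
  simp only [softmax, ← sum_div]
  exact div_self (sum_pos (fun _ _ => exp_pos _) univ_nonempty).ne'

lemma abs_sub_V_le {A : Type*} [Fintype A] (θ : A → ℝ) {r : A → ℝ}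
    (hr : ∀ a, r a ∈ Set.Icc (0 : ℝ) 1) (b : A) : |r b - V r θ| ≤ 1 - softmax θ b :=
  have : Nonempty A := ⟨b⟩
  abs_sub_sum_mul_le_one_sub (softmax_nonneg θ) (sum_softmax θ) hr b

theorem softmax_bandit_grad_le_two_entropy_general {A : Type*} [Fintype A]
    (θ : A → ℝ) (r : A → ℝ) (hr : ∀ a, r a ∈ Set.Icc (0 : ℝ) 1) :
    Real.sqrt (∑ b, (softmax θ b * (r b - V r θ)) ^ 2) ≤
      2 * (-∑ a, softmax θ a * Real.log (softmax θ a)) := by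
  have hp := softmax_nonneg θ
  have hle_entropy : Real.sqrt (∑ b, (softmax θ b * (r b - V r θ)) ^ 2) ≤
      -∑ a, softmax θ a * Real.log (softmax θ a) :=
    calc _ ≤ ∑ b, |softmax θ b * (r b - V r θ)| := sqrt_sum_sq_le_sum_abs _ _
      _ ≤ ∑ b, softmax θ b * (1 - softmax θ b) := sum_le_sum fun b _ => by
          rw [abs_mul, abs_of_nonneg (hp b)]
          exact mul_le_mul_of_nonneg_left (abs_sub_V_le θ hr b) (hp b)
      _ ≤ ∑ b, negMulLog (softmax θ b) := sum_le_sum fun b _ => mul_one_sub_le_negMulLog (hp b)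
      _ = -∑ a, softmax θ a * Real.log (softmax θ a) := by
          simp only [negMulLog, neg_mul, sum_neg_distrib]
  linarith [Real.sqrt_nonneg (∑ b, (softmax θ b * (r b - V r θ)) ^ 2)]

theorem softmax_bandit_grad_le_two_entropy {A : Type*} [Fintype A] [Nonempty A]
    (θ : A → ℝ) (r : A → ℝ) (hr : ∀ a, r a ∈ Set.Icc (0 : ℝ) 1) :
    Real.sqrt (∑ b, (softmax θ b * (r b - V r θ)) ^ 2) ≤
      2 * (-∑ a, softmax θ a * Real.log (softmax θ a)) :=
  softmax_bandit_grad_le_two_entropy_general θ r hr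
end

section
/- Let π_θ and π_ζ be softmax distributions on finite A with logits θ and ζ. Then KL(π_θ ‖ π_ζ) ≤ (1/2) min_{c∈ℝ} ‖θ - ζ - c·1‖_∞². -/
open Real Finset

theorem kl_softmax_le_inf_norm_sq {A : Type*} [Fintype A] [Nonempty A]
    (θ ζ : A → ℝ) :
    ∑ a, softmax θ a * Real.log (softmax θ a / softmax ζ a)
      ≤ (1 / 2) * ⨅ c : ℝ, (Finset.univ.sup' Finset.univ_nonempty
          (fun a => |θ a - ζ a - c|)) ^ 2 := by
  set KL := ∑ a, softmax θ a * Real.log (softmax θ a / softmax ζ a) with hKLdef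
  have key : ∀ c : ℝ, KL ≤ (1/2) * (Finset.univ.sup' Finset.univ_nonempty
      (fun a => |θ a - ζ a - c|)) ^ 2 := by
    intro c
    set m : ℝ := Finset.univ.sup' Finset.univ_nonempty (fun a => |θ a - ζ a - c|) with hmdef
    set u : A → ℝ := fun a => ζ a - θ a with hudef
    set Z : ℝ → ℝ := fun t => ∑ a, Real.exp (θ a + t * u a) with hZdef
    set Z₁ : ℝ → ℝ := fun t => ∑ a, u a * Real.exp (θ a + t * u a) with hZ1def
    set Z₂ : ℝ → ℝ := fun t => ∑ a, (u a) ^ 2 * Real.exp (θ a + t * u a) with hZ2def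
    have hZpos : ∀ t, 0 < Z t := fun t =>
      Finset.sum_pos (fun a _ => Real.exp_pos _) Finset.univ_nonempty
    have hZd : ∀ t, HasDerivAt Z (Z₁ t) t := by
      intro t
      have : HasDerivAt (fun t => ∑ a, Real.exp (θ a + t * u a))
          (∑ a, u a * Real.exp (θ a + t * u a)) t := by
        apply HasDerivAt.fun_sum
        intro a _
        have h1 : HasDerivAt (fun t : ℝ => θ a + t * u a) (u a) t := by
          simpa using (hasDerivAt_mul_const (u a)).const_add (θ a)
        simpa [mul_comm] using h1.exp
      simpa [hZdef, hZ1def] using this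
    have hZ1d : ∀ t, HasDerivAt Z₁ (Z₂ t) t := by
      intro t
      have : HasDerivAt (fun t => ∑ a, u a * Real.exp (θ a + t * u a))
          (∑ a, (u a) ^ 2 * Real.exp (θ a + t * u a)) t := by
        apply HasDerivAt.fun_sum
        intro a _
        have h1 : HasDerivAt (fun t : ℝ => θ a + t * u a) (u a) t := by
          simpa using (hasDerivAt_mul_const (u a)).const_add (θ a)
        have := (h1.exp).const_mul (u a)
        refine this.congr_deriv ?_
        ring
      simpa [hZ1def, hZ2def] using this
    have hgd : ∀ t, HasDerivAt (fun t => Real.log (Z t)) (Z₁ t / Z t) t := by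
      intro t
      exact (hZd t).log (ne_of_gt (hZpos t))
    have hGd : ∀ t, HasDerivAt (fun t => Z₁ t / Z t)
        (Z₂ t / Z t - (Z₁ t / Z t) ^ 2) t := by
      intro t
      have := (hZ1d t).div (hZd t) (ne_of_gt (hZpos t))
      refine this.congr_deriv ?_
      have hz := (hZpos t).ne'
      field_simp
    -- variance bound
    have hvm : ∀ a : A, |u a + c| ≤ m := by
      intro a
      have : |θ a - ζ a - c| ≤ m := by
        rw [hmdef]; exact Finset.le_sup' (fun a => |θ a - ζ a - c|) (Finset.mem_univ a)
      have he : θ a - ζ a - c = -(u a + c) := by simp [hudef]; ring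
      rwa [he, abs_neg] at this
    have hvar : ∀ t, Z₂ t / Z t - (Z₁ t / Z t) ^ 2 ≤ m ^ 2 := by
      intro t
      set W₁ : ℝ := ∑ a, (u a + c) * Real.exp (θ a + t * u a) with hW1
      set W₂ : ℝ := ∑ a, (u a + c) ^ 2 * Real.exp (θ a + t * u a) with hW2
      have e1 : W₁ = Z₁ t + c * Z t := by
        rw [hW1, hZ1def, hZdef, Finset.mul_sum, ← Finset.sum_add_distrib]
        exact Finset.sum_congr rfl fun a _ => by ring
      have e2 : W₂ = Z₂ t + 2 * c * Z₁ t + c ^ 2 * Z t := by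
        rw [hW2, hZ2def, hZ1def, hZdef, Finset.mul_sum, Finset.mul_sum,
          ← Finset.sum_add_distrib, ← Finset.sum_add_distrib]
        exact Finset.sum_congr rfl fun a _ => by ring
      have eid : Z₂ t / Z t - (Z₁ t / Z t) ^ 2 = W₂ / Z t - (W₁ / Z t) ^ 2 := by
        rw [e1, e2]
        field_simp
        ring
      have hW2le : W₂ ≤ m ^ 2 * Z t := by
        rw [hW2, Finset.mul_sum]
        apply Finset.sum_le_sum
        intro a _
        have h1 : (u a + c) ^ 2 ≤ m ^ 2 := by
          have := hvm a
          calc (u a + c) ^ 2 = |u a + c| ^ 2 := (sq_abs _).symm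
            _ ≤ m ^ 2 := by
                apply pow_le_pow_left₀ (abs_nonneg _) this
        exact mul_le_mul_of_nonneg_right h1 (Real.exp_pos _).le
      rw [eid]
      have : W₂ / Z t ≤ m ^ 2 := by
        rw [div_le_iff₀ (hZpos t)]
        linarith
      nlinarith [sq_nonneg (W₁ / Z t)]
    -- first comparison: Z₁ t / Z t ≤ Z₁ 0 / Z 0 + m^2 * t on [0,1]
    have hk : ∀ t, HasDerivAt (fun t => Z₁ t / Z t - m ^ 2 * t)
        (Z₂ t / Z t - (Z₁ t / Z t) ^ 2 - m ^ 2) t := by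
      intro t
      have h2 : HasDerivAt (fun t : ℝ => m ^ 2 * t) (m ^ 2) t := by
        simpa using (hasDerivAt_id t).const_mul (m ^ 2)
      exact (hGd t).sub h2
    have hkmono : AntitoneOn (fun t => Z₁ t / Z t - m ^ 2 * t) (Set.Icc 0 1) := by
      apply antitoneOn_of_deriv_nonpos (convex_Icc 0 1)
      · exact fun x _ => ((hk x).continuousAt).continuousWithinAt
      · exact fun x _ => ((hk x).differentiableAt).differentiableWithinAt
      · intro x _
        rw [(hk x).deriv]
        have := hvar x
        linarith
    have hstep : ∀ t ∈ Set.Icc (0:ℝ) 1, Z₁ t / Z t ≤ Z₁ 0 / Z 0 + m ^ 2 * t := by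
      intro t ht
      have h0 : (0:ℝ) ∈ Set.Icc (0:ℝ) 1 := by norm_num
      have := hkmono h0 ht ht.1
      simp only [mul_zero, sub_zero] at this
      linarith
    have hh : ∀ t, HasDerivAt (fun t => Real.log (Z t) - (Z₁ 0 / Z 0 * t + m ^ 2 / 2 * t ^ 2))
        (Z₁ t / Z t - (Z₁ 0 / Z 0 + m ^ 2 * t)) t := by
      intro t
      have h1 : HasDerivAt (fun t : ℝ => Z₁ 0 / Z 0 * t) (Z₁ 0 / Z 0) t := by
        simpa using (hasDerivAt_id t).const_mul (Z₁ 0 / Z 0)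
      have h2 : HasDerivAt (fun t : ℝ => m ^ 2 / 2 * t ^ 2) (m ^ 2 * t) t := by
        have := (hasDerivAt_pow 2 t).const_mul (m ^ 2 / 2)
        refine this.congr_deriv ?_
        ring
      exact (hgd t).sub (h1.add h2)
    have hhmono : AntitoneOn (fun t => Real.log (Z t)
        - (Z₁ 0 / Z 0 * t + m ^ 2 / 2 * t ^ 2)) (Set.Icc 0 1) := by
      apply antitoneOn_of_deriv_nonpos (convex_Icc 0 1)
      · exact fun x _ => ((hh x).continuousAt).continuousWithinAt
      · exact fun x _ => ((hh x).differentiableAt).differentiableWithinAt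
      · intro x hx
        rw [(hh x).deriv]
        rw [interior_Icc] at hx
        have := hstep x ⟨hx.1.le, hx.2.le⟩
        linarith
    have hfin : Real.log (Z 1) - Real.log (Z 0) - Z₁ 0 / Z 0 ≤ m ^ 2 / 2 := by
      have h0 : (0:ℝ) ∈ Set.Icc (0:ℝ) 1 := by norm_num
      have h1 : (1:ℝ) ∈ Set.Icc (0:ℝ) 1 := by norm_num
      have := hhmono h0 h1 zero_le_one
      simp only [mul_one, one_pow, mul_zero, zero_pow, add_zero, sub_zero] at this
      linarith
    -- identify KL with the Bregman divergence
    have hZ1v : Z 1 = ∑ a, Real.exp (ζ a) := by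
      simp only [hZdef, hudef]
      exact Finset.sum_congr rfl fun a _ => by ring_nf
    have hZ0v : Z 0 = ∑ a, Real.exp (θ a) := by
      simp only [hZdef, hudef]
      exact Finset.sum_congr rfl fun a _ => by norm_num
    have hZ10v : Z₁ 0 = ∑ a, (ζ a - θ a) * Real.exp (θ a) := by
      simp only [hZ1def, hudef]
      exact Finset.sum_congr rfl fun a _ => by norm_num
    have hSθ : (0:ℝ) < ∑ a, Real.exp (θ a) :=
      Finset.sum_pos (fun a _ => Real.exp_pos _) Finset.univ_nonempty
    have hSζ : (0:ℝ) < ∑ a, Real.exp (ζ a) :=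
      Finset.sum_pos (fun a _ => Real.exp_pos _) Finset.univ_nonempty
    have hlog : ∀ a, Real.log (softmax θ a / softmax ζ a)
        = θ a - ζ a + (Real.log (∑ a', Real.exp (ζ a')) - Real.log (∑ a', Real.exp (θ a'))) := by
      intro a
      unfold softmax
      rw [Real.log_div (div_pos (Real.exp_pos _) hSθ).ne' (div_pos (Real.exp_pos _) hSζ).ne',
        Real.log_div (Real.exp_ne_zero _) (ne_of_gt hSθ),
        Real.log_div (Real.exp_ne_zero _) (ne_of_gt hSζ), Real.log_exp, Real.log_exp]
      ring
    have hone : ∑ a, softmax θ a = 1 := by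
      unfold softmax
      rw [← Finset.sum_div, div_self (ne_of_gt hSθ)]
    have hKL : KL = Real.log (Z 1) - Real.log (Z 0) - Z₁ 0 / Z 0 := by
      rw [hKLdef]
      have hterm : ∀ a ∈ Finset.univ, softmax θ a * Real.log (softmax θ a / softmax ζ a)
          = (θ a - ζ a) * softmax θ a
            + (Real.log (∑ a', Real.exp (ζ a')) - Real.log (∑ a', Real.exp (θ a'))) * softmax θ a := by
        intro a _; rw [hlog a]; ring
      rw [Finset.sum_congr rfl hterm, Finset.sum_add_distrib, ← Finset.mul_sum, hone, mul_one]
      have e3 : ∑ a, (θ a - ζ a) * softmax θ a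
          = (∑ a, (θ a - ζ a) * Real.exp (θ a)) / ∑ a', Real.exp (θ a') := by
        unfold softmax
        rw [Finset.sum_div]
        exact Finset.sum_congr rfl fun a _ => by ring
      have e4 : (∑ a, (ζ a - θ a) * Real.exp (θ a))
          = -(∑ a, (θ a - ζ a) * Real.exp (θ a)) := by
        rw [← Finset.sum_neg_distrib]
        exact Finset.sum_congr rfl fun a _ => by ring
      rw [e3, hZ1v, hZ0v, hZ10v, e4]
      ring
    rw [hKL]
    linarith
  have h2 : KL * 2 ≤ ⨅ c : ℝ, (Finset.univ.sup' Finset.univ_nonempty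
      (fun a => |θ a - ζ a - c|)) ^ 2 :=
    le_ciInf fun c => by linarith [key c]
  linarith
end

section
/- In the one-step entropy-regularized softmax bandit: let λ > 0, r : A → ℝ, V_λ(θ) = ∑_a π_θ(a)(r(a) - λ log π_θ(a)). Then ∂V_λ/∂θ_b = π_θ(b)(r(b) - λ log π_θ(b) - V_λ(θ)) for every b. -/
open Real Finset

noncomputable def Vlam {A : Type*} [Fintype A] (lam : ℝ) (r : A → ℝ) (θ : A → ℝ) : ℝ :=
  ∑ a, softmax θ a * (r a - lam * Real.log (softmax θ a))

theorem entreg_softmax_policy_gradient {A : Type*} [Fintype A] [Nonempty A] [DecidableEq A]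
    (lam : ℝ) (hlam : 0 < lam) (θ : A → ℝ) (r : A → ℝ) (b : A) :
    HasDerivAt (fun t : ℝ => Vlam lam r (Function.update θ b t))
      (softmax θ b * (r b - lam * Real.log (softmax θ b) - Vlam lam r θ)) (θ b) := by
  classical
  set C : ℝ := ∑ a ∈ univ.erase b, Real.exp (θ a) with hC
  set K : ℝ := ∑ a ∈ univ.erase b, Real.exp (θ a) * (r a - lam * θ a) with hK
  set S : ℝ → ℝ := fun t => Real.exp t + C with hSdef
  set F : ℝ → ℝ := fun t => Real.exp t * (r b - lam * t) + K with hFdef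
  have hCnn : 0 ≤ C := Finset.sum_nonneg fun a _ => (Real.exp_pos _).le
  have hSpos : ∀ t, 0 < S t := fun t =>
    add_pos_of_pos_of_nonneg (Real.exp_pos t) hCnn
  have hsum : ∀ t, ∑ a, Real.exp (Function.update θ b t a) = S t := by
    intro t
    rw [← Finset.add_sum_erase _ _ (Finset.mem_univ b)]
    simp only [Function.update_self, hSdef]
    congr 1
    exact Finset.sum_congr rfl fun a ha =>
      by rw [Function.update_of_ne (Finset.ne_of_mem_erase ha)]
  have hfsum : ∀ t, ∑ a, Real.exp (Function.update θ b t a) *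
      (r a - lam * Function.update θ b t a) = F t := by
    intro t
    rw [← Finset.add_sum_erase _ _ (Finset.mem_univ b)]
    simp only [Function.update_self, hFdef]
    congr 1
    exact Finset.sum_congr rfl fun a ha => by
      rw [Function.update_of_ne (Finset.ne_of_mem_erase ha)]
  have hsm : ∀ t a, softmax (Function.update θ b t) a =
      Real.exp (Function.update θ b t a) / S t := by
    intro t a; unfold softmax; rw [hsum]
  have hlog : ∀ t a, Real.log (softmax (Function.update θ b t) a) =
      Function.update θ b t a - Real.log (S t) := by
    intro t a
    rw [hsm, Real.log_div (Real.exp_ne_zero _) (hSpos t).ne', Real.log_exp]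
  have heq : ∀ t, Vlam lam r (Function.update θ b t)
      = F t / S t + lam * Real.log (S t) := by
    intro t
    unfold Vlam
    have hterm : ∀ a, softmax (Function.update θ b t) a *
        (r a - lam * Real.log (softmax (Function.update θ b t) a))
        = Real.exp (Function.update θ b t a) *
            (r a - lam * Function.update θ b t a) / S t
          + lam * Real.log (S t) * (Real.exp (Function.update θ b t a) / S t) := by
      intro a
      rw [hlog, hsm]
      field_simp
      ring
    rw [Finset.sum_congr rfl fun a _ => hterm a, Finset.sum_add_distrib,
      ← Finset.sum_div, hfsum, ← Finset.mul_sum, ← Finset.sum_div, hsum,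
      div_self (hSpos t).ne', mul_one]
  have hfun : (fun t : ℝ => Vlam lam r (Function.update θ b t))
      = fun t => F t / S t + lam * Real.log (S t) := funext heq
  rw [hfun]
  set t0 := θ b
  have hS : HasDerivAt S (Real.exp t0) t0 := (Real.hasDerivAt_exp t0).add_const C
  have hg : HasDerivAt (fun t : ℝ => r b - lam * t) (-lam) t0 :=
    by simpa using ((hasDerivAt_id t0).const_mul lam).const_sub (r b)
  have hF : HasDerivAt F (Real.exp t0 * (r b - lam * t0) + Real.exp t0 * (-lam)) t0 :=
    ((Real.hasDerivAt_exp t0).mul hg).add_const K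
  have key : HasDerivAt (fun t => F t / S t + lam * Real.log (S t))
      (((Real.exp t0 * (r b - lam * t0) + Real.exp t0 * (-lam)) * S t0
          - F t0 * Real.exp t0) / S t0 ^ 2
        + lam * (Real.exp t0 / S t0)) t0 :=
    (hF.div hS (hSpos t0).ne').add ((hS.log (hSpos t0).ne').const_mul lam)
  convert key using 1
  have hupd : Function.update θ b t0 = θ := Function.update_eq_self b θ
  have h1 : softmax θ b = Real.exp t0 / S t0 := by
    have := hsm t0 b; rw [hupd] at this; simpa [t0] using this
  have h2 : Real.log (softmax θ b) = t0 - Real.log (S t0) := by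
    have := hlog t0 b; rw [hupd] at this; simpa [t0] using this
  have h3 : Vlam lam r θ = F t0 / S t0 + lam * Real.log (S t0) := by
    have := heq t0; rwa [hupd] at this
  rw [h3, h2, h1]
  have hS0 := (hSpos t0).ne'
  field_simp
  ring
end

section
/- One-step Łojasiewicz-type inequality for entropy-regularized softmax bandits: let λ > 0, r : A → ℝ bounded, π* the Gibbs distribution π*(a) ∝ exp(r(a)/λ), and suppose ‖∇V_λ(θ)‖ ≤ ε where ∇V_λ has coordinates π_θ(b)(r(b) - λ log π_θ(b) - V_λ(θ)). Then V_λ* - V_λ(θ) ≤ ε²/(2λ C) where V_λ* = λ log ∑_a exp(r(a)/λ) and C = (min_a π_θ(a))². -/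
open Real Finset

/-!
Write `d = r / λ - θ` and `x = d - 𝔼_{π_θ} d`. Both sides of the inequality are controlled by the
single quantity `M = max_a |x a|`. The gradient has coordinates `λ π_θ(b) x_b`, so
`λ · min_a π_θ(a) · M ≤ ‖∇V_λ(θ)‖ ≤ ε`. The suboptimality gap is the KL divergence
`λ log 𝔼_{π_θ} exp x` of `π_θ` from the Gibbs policy, and since `x` is centred under `π_θ` and
bounded by `M`, Hoeffding's lemma gives `log 𝔼_{π_θ} exp x ≤ M² / 2`.
-/

/-- The chord of `exp` over `[-M, M]` lies above its graph. -/
lemma Real.exp_le_cosh_add_mul_sinh_div {t M : ℝ} (ht : |t| ≤ M) :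
    exp t ≤ cosh M + t * (sinh M / M) := by
  rcases (abs_nonneg t).trans ht |>.eq_or_lt with rfl | hM
  · simp [abs_nonpos_iff.mp ht]
  obtain ⟨htl, htr⟩ := abs_le.mp ht
  have hconv := convexOn_exp.2 (Set.mem_univ (-M)) (Set.mem_univ M)
    (div_nonneg (by linarith) (by linarith) : 0 ≤ (M - t) / (2 * M))
    (div_nonneg (by linarith) (by linarith) : 0 ≤ (t + M) / (2 * M)) (by field_simp; ring)
  have hpoint : ((M - t) / (2 * M)) • -M + ((t + M) / (2 * M)) • M = t := by
    simp only [smul_eq_mul]; field_simp; ring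
  rw [hpoint] at hconv
  calc exp t ≤ ((M - t) / (2 * M)) • exp (-M) + ((t + M) / (2 * M)) • exp M := hconv
    _ = cosh M + t * (sinh M / M) := by
      simp only [smul_eq_mul, cosh_eq, sinh_eq]; field_simp; ring

/-- Hoeffding's lemma for a finitely supported distribution. -/
lemma Finset.sum_mul_exp_le_exp_half_sq {ι : Type*} (s : Finset ι) {p x : ι → ℝ} {M : ℝ}
    (hp : ∀ i ∈ s, 0 ≤ p i) (hp_sum : ∑ i ∈ s, p i = 1) (hx_mean : ∑ i ∈ s, p i * x i = 0)
    (hx : ∀ i ∈ s, |x i| ≤ M) :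
    ∑ i ∈ s, p i * exp (x i) ≤ exp (M ^ 2 / 2) :=
  calc ∑ i ∈ s, p i * exp (x i) ≤ ∑ i ∈ s, p i * (cosh M + x i * (sinh M / M)) :=
        sum_le_sum fun i hi ↦
          mul_le_mul_of_nonneg_left (exp_le_cosh_add_mul_sinh_div (hx i hi)) (hp i hi)
    _ = cosh M := by
        simp only [mul_add, sum_add_distrib, ← sum_mul, ← mul_assoc, hp_sum, hx_mean]; ring
    _ ≤ exp (M ^ 2 / 2) := cosh_le_exp_half_sq M

namespace Softmax

variable {A : Type*} [Fintype A]

lemma softmax_pos [Nonempty A] (θ : A → ℝ) (a : A) : 0 < softmax θ a :=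
  div_pos (exp_pos _) (sum_pos (fun _ _ ↦ exp_pos _) univ_nonempty)

lemma sum_softmax [Nonempty A] (θ : A → ℝ) : ∑ a, softmax θ a = 1 := by
  simp only [softmax, ← sum_div]
  exact div_self (sum_pos (fun _ _ ↦ exp_pos _) univ_nonempty).ne'

lemma log_softmax [Nonempty A] (θ : A → ℝ) (a : A) :
    log (softmax θ a) = θ a - log (∑ a', exp (θ a')) :=
  (log_div (exp_pos _).ne' (sum_pos (fun _ _ ↦ exp_pos _) univ_nonempty).ne').trans
    (by rw [log_exp])

/-- `r / λ` are the logits of the Gibbs policy. -/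
noncomputable def centredResidual (lam : ℝ) (r θ : A → ℝ) (a : A) : ℝ :=
  (r a / lam - θ a) - ∑ b, softmax θ b * (r b / lam - θ b)

variable [Nonempty A] {lam : ℝ} (r θ : A → ℝ)

lemma sum_softmax_mul_centredResidual :
    ∑ a, softmax θ a * centredResidual lam r θ a = 0 := by
  simp only [centredResidual, mul_sub, sum_sub_distrib, ← sum_mul, sum_softmax, one_mul, sub_self]

lemma sub_mul_log_softmax (hlam : lam ≠ 0) (a : A) :
    r a - lam * log (softmax θ a) = lam * (r a / lam - θ a + log (∑ a', exp (θ a'))) := by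
  rw [log_softmax]; field_simp; ring

lemma Vlam_eq (hlam : lam ≠ 0) :
    Vlam lam r θ =
      lam * (∑ b, softmax θ b * (r b / lam - θ b) + log (∑ a', exp (θ a'))) := by
  simp only [Vlam, sub_mul_log_softmax r θ hlam, mul_add, sum_add_distrib, ← sum_mul,
    sum_softmax, one_mul]
  simp only [← mul_assoc, mul_comm _ lam, mul_sum]

lemma softmax_mul_sub_Vlam (hlam : lam ≠ 0) (b : A) :
    softmax θ b * (r b - lam * log (softmax θ b) - Vlam lam r θ) =
      lam * (softmax θ b * centredResidual lam r θ b) := by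
  rw [sub_mul_log_softmax r θ hlam, Vlam_eq r θ hlam, centredResidual]; ring

/-- The suboptimality gap is `λ` times the KL divergence of `π_θ` from the Gibbs policy. -/
lemma log_sum_exp_sub_Vlam (hlam : lam ≠ 0) :
    lam * log (∑ a, exp (r a / lam)) - Vlam lam r θ =
      lam * log (∑ a, softmax θ a * exp (centredResidual lam r θ a)) := by
  set Z := ∑ a', exp (θ a')
  set c := ∑ b, softmax θ b * (r b / lam - θ b)
  have hZ : 0 < Z := sum_pos (fun _ _ ↦ exp_pos _) univ_nonempty
  have hsum : ∑ a, exp (r a / lam) =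
      Z * exp c * ∑ a, softmax θ a * exp (centredResidual lam r θ a) := by
    have hx : ∀ a, centredResidual lam r θ a = r a / lam - θ a - c := fun _ ↦ rfl
    have hp : ∀ a, softmax θ a = exp (θ a) / Z := fun _ ↦ rfl
    clear_value Z c
    simp only [mul_sum, hx, hp, exp_sub]
    refine sum_congr rfl fun a _ ↦ ?_
    field_simp
  have hS : 0 < ∑ a, softmax θ a * exp (centredResidual lam r θ a) :=
    sum_pos (fun a _ ↦ mul_pos (softmax_pos θ a) (exp_pos _)) univ_nonempty
  rw [hsum, Vlam_eq r θ hlam, log_mul (by positivity) hS.ne', log_mul hZ.ne' (exp_pos c).ne',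
    log_exp]
  ring

lemma log_sum_exp_sub_Vlam_le (hlam : 0 < lam) :
    lam * log (∑ a, exp (r a / lam)) - Vlam lam r θ ≤
      lam * ((univ.sup' univ_nonempty fun a ↦ |centredResidual lam r θ a|) ^ 2 / 2) := by
  rw [log_sum_exp_sub_Vlam r θ hlam.ne']
  refine mul_le_mul_of_nonneg_left ?_ hlam.le
  rw [log_le_iff_le_exp (sum_pos (fun a _ ↦ mul_pos (softmax_pos θ a) (exp_pos _))
    univ_nonempty)]
  exact univ.sum_mul_exp_le_exp_half_sq (fun a _ ↦ (softmax_pos θ a).le) (sum_softmax θ)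
    (sum_softmax_mul_centredResidual r θ)
    fun a _ ↦ le_sup' (fun a ↦ |centredResidual lam r θ a|) (mem_univ a)

lemma mul_inf'_softmax_mul_sup'_le_sqrt (hlam : 0 < lam) :
    lam * (univ.inf' univ_nonempty (softmax θ) *
        univ.sup' univ_nonempty fun a ↦ |centredResidual lam r θ a|) ≤
      √(∑ b, (softmax θ b * (r b - lam * log (softmax θ b) - Vlam lam r θ)) ^ 2) := by
  obtain ⟨b, -, hb⟩ := exists_mem_eq_sup' univ_nonempty fun a ↦ |centredResidual lam r θ a|
  have hcoord := abs_le_sqrt (single_le_sum (fun a _ ↦ sq_nonneg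
    (softmax θ a * (r a - lam * log (softmax θ a) - Vlam lam r θ))) (mem_univ b))
  rw [softmax_mul_sub_Vlam r θ hlam.ne', abs_mul, abs_mul, abs_of_pos hlam,
    abs_of_pos (softmax_pos θ b)] at hcoord
  rw [hb]
  exact le_trans (mul_le_mul_of_nonneg_left (mul_le_mul_of_nonneg_right
    (inf'_le _ (mem_univ b)) (abs_nonneg _)) hlam.le) hcoord

end Softmax

open Softmax

theorem entreg_lojasiewicz {A : Type*} [Fintype A] [Nonempty A]
    (lam : ℝ) (hlam : 0 < lam) (θ : A → ℝ) (r : A → ℝ) (ε : ℝ)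
    (hgrad : Real.sqrt (∑ b,
        (softmax θ b * (r b - lam * Real.log (softmax θ b) - Vlam lam r θ)) ^ 2) ≤ ε) :
    lam * Real.log (∑ a, Real.exp (r a / lam)) - Vlam lam r θ ≤
      ε ^ 2 / (2 * lam * (Finset.univ.inf' Finset.univ_nonempty (softmax θ)) ^ 2) := by
  set pmin := univ.inf' univ_nonempty (softmax θ)
  set M := univ.sup' univ_nonempty fun a ↦ |centredResidual lam r θ a|
  have hpmin : 0 < pmin := (lt_inf'_iff _).2 fun a _ ↦ softmax_pos θ a
  have hM : 0 ≤ M := (abs_nonneg _).trans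
    (le_sup' (fun a ↦ |centredResidual lam r θ a|) (mem_univ (Classical.arbitrary A)))
  have hgradM : lam * (pmin * M) ≤ ε := (mul_inf'_softmax_mul_sup'_le_sqrt r θ hlam).trans hgrad
  have hsq : (lam * pmin * M) ^ 2 ≤ ε ^ 2 :=
    pow_le_pow_left₀ (by positivity) (by rwa [mul_assoc]) 2
  calc _ ≤ lam * (M ^ 2 / 2) := log_sum_exp_sub_Vlam_le r θ hlam
    _ ≤ ε ^ 2 / (2 * lam * pmin ^ 2) := by
      rw [le_div_iff₀ (by positivity)]; nlinarith
end
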